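/- arXiv:1502.04928 — 2 statements merged into one kernel-verified Lean document; each statement's English description precedes it below -/
import Mathlib

section
/- Let A, B ∈ ℝ^{n×n} with A Metzler and B entrywise nonnegative. If A + B is Hurwitz, then there exist diagonal positive definite matrices P, Q with A^T P + P A + Q + P B Q^{-1} B^T P ≺ 0. -/
/-!
Write `M = A + B`, a Metzler Hurwitz matrix. Along the path `t • M - (1 - t) • 1` from `-1` to `M`
all matrices are Metzler and invertible, and the solution of `N u = -𝟙` cannot leave the positive
orthant, because a Metzler `N` with `N u < 0` and `u ≥ 0` forces `u > 0`. This gives `v, w > 0`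
with `M v < 0` and `Mᵀ w < 0`.

Take `P = diag (w / v)` and `Q = diag (-(Aᵀ w) / v)`, so that `P v = w` and `Q v = -Aᵀ w` cancels
`Aᵀ P v`. The Riccati matrix `R` is symmetric and Metzler, and `Mᵀ w < 0` gives `Q v ≥ Bᵀ w`, i.e.
`Q⁻¹ Bᵀ w ≤ v`, hence `R v = P (A v + B Q⁻¹ Bᵀ w) ≤ P M v < 0`. Finally a symmetric Metzler `R`
with `R v < 0` for some `v > 0` is negative definite, since `xᵀ R x ≤ ∑ᵢ xᵢ² / vᵢ * (R v)ᵢ` by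
AM-GM on the off-diagonal terms.
-/

open Matrix

theorem forall_pos_of_nonneg_imp_pos {X ι : Type*} [TopologicalSpace X] [PreconnectedSpace X]
    [Finite ι] {f : X → ι → ℝ} (hf : Continuous f) {x₀ : X} (h₀ : ∀ i, 0 < f x₀ i)
    (h : ∀ x, (∀ i, 0 ≤ f x i) → ∀ i, 0 < f x i) (x : X) : ∀ i, 0 < f x i := by
  have hcoord (i : ι) : Continuous fun x => f x i := (continuous_apply i).comp hf
  have hopen : IsOpen {x | ∀ i, 0 < f x i} := by
    simpa only [Set.ofPred_forall] using
      isOpen_iInter_of_finite fun i => isOpen_lt continuous_const (hcoord i)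
  have hclosed : IsClosed {x | ∀ i, 0 < f x i} := by
    have : {x | ∀ i, 0 < f x i} = ⋂ i, {x | 0 ≤ f x i} := by
      ext x
      simp only [Set.mem_ofPred_eq, Set.mem_iInter]
      exact ⟨fun hx i => (hx i).le, h x⟩
    rw [this]
    exact isClosed_iInter fun i => isClosed_le continuous_const (hcoord i)
  exact Set.eq_univ_iff_forall.1 (IsClopen.eq_univ ⟨hclosed, hopen⟩ ⟨x₀, h₀⟩) x

theorem two_mul_mul_le_sq_div_mul_add {a b c d : ℝ} (hc : 0 < c) (hd : 0 < d) :
    2 * (a * b) ≤ a ^ 2 / c * d + b ^ 2 / d * c := by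
  have key : a ^ 2 / c * d + b ^ 2 / d * c - 2 * (a * b) = (a * d - b * c) ^ 2 / (c * d) := by
    field_simp
    ring
  have : 0 ≤ (a * d - b * c) ^ 2 / (c * d) := by positivity
  linarith

namespace Matrix

section Metzler

variable {ι : Type*}

def IsMetzler (M : Matrix ι ι ℝ) : Prop :=
  ∀ i j, i ≠ j → 0 ≤ M i j

theorem isMetzler_of_nonneg {M : Matrix ι ι ℝ} (hM : ∀ i j, 0 ≤ M i j) : M.IsMetzler :=
  fun i j _ => hM i j

theorem IsMetzler.add {M N : Matrix ι ι ℝ} (hM : M.IsMetzler) (hN : N.IsMetzler) :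
    (M + N).IsMetzler :=
  fun i j hij => add_nonneg (hM i j hij) (hN i j hij)

theorem IsMetzler.transpose {M : Matrix ι ι ℝ} (hM : M.IsMetzler) : Mᵀ.IsMetzler :=
  fun i j hij => hM j i hij.symm

theorem IsMetzler.smul {M : Matrix ι ι ℝ} (hM : M.IsMetzler) {t : ℝ} (ht : 0 ≤ t) :
    (t • M).IsMetzler :=
  fun i j hij => mul_nonneg ht (hM i j hij)

theorem IsMetzler.sub_smul_one [DecidableEq ι] {M : Matrix ι ι ℝ} (hM : M.IsMetzler) (c : ℝ) :
    (M - c • 1).IsMetzler := fun i j hij => by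
  simpa [one_apply_ne hij] using hM i j hij

theorem isMetzler_diagonal [DecidableEq ι] (d : ι → ℝ) : (diagonal d).IsMetzler :=
  fun i j hij => by simp [diagonal_apply_ne _ hij]

theorem IsMetzler.mul_diagonal [Fintype ι] [DecidableEq ι] {M : Matrix ι ι ℝ}
    (hM : M.IsMetzler) {d : ι → ℝ} (hd : ∀ i, 0 ≤ d i) : (M * diagonal d).IsMetzler :=
  fun i j hij => by simpa only [Matrix.mul_diagonal] using mul_nonneg (hM i j hij) (hd j)

theorem IsMetzler.diagonal_mul [Fintype ι] [DecidableEq ι] {M : Matrix ι ι ℝ}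
    (hM : M.IsMetzler) {d : ι → ℝ} (hd : ∀ i, 0 ≤ d i) : (diagonal d * M).IsMetzler :=
  fun i j hij => by simpa only [Matrix.diagonal_mul] using mul_nonneg (hd i) (hM i j hij)

theorem IsMetzler.pos_of_mulVec_neg [Fintype ι] {M : Matrix ι ι ℝ} (hM : M.IsMetzler)
    {u : ι → ℝ} (hu : ∀ j, 0 ≤ u j) {i : ι} (h : (M *ᵥ u) i < 0) : 0 < u i := by
  refine (hu i).lt_of_ne fun hui => h.not_ge (Finset.sum_nonneg fun j _ => ?_)
  rcases eq_or_ne i j with rfl | hij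
  · simp [← hui]
  · exact mul_nonneg (hM i j hij) (hu j)

theorem IsMetzler.dotProduct_mulVec_le [Fintype ι] {S : Matrix ι ι ℝ} (hS : S.IsSymm)
    (hM : S.IsMetzler) {v : ι → ℝ} (hv : ∀ i, 0 < v i) (x : ι → ℝ) :
    x ⬝ᵥ (S *ᵥ x) ≤ ∑ i, x i ^ 2 / v i * (S *ᵥ v) i := by
  have hterm (i j : ι) :
      2 * (x i * (S i j * x j)) ≤
        x i ^ 2 / v i * (S i j * v j) + x j ^ 2 / v j * (S i j * v i) := by
    rcases eq_or_ne i j with rfl | hij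
    · exact le_of_eq (by field_simp [(hv i).ne']; ring)
    · have := mul_le_mul_of_nonneg_left
        (two_mul_mul_le_sq_div_mul_add (a := x i) (b := x j) (hv i) (hv j)) (hM i j hij)
      linarith
  have hswap :
      ∑ i, ∑ j, x j ^ 2 / v j * (S i j * v i) = ∑ i, x i ^ 2 / v i * (S *ᵥ v) i := by
    rw [Finset.sum_comm]
    refine Finset.sum_congr rfl fun i _ => ?_
    rw [mulVec, dotProduct, Finset.mul_sum]
    refine Finset.sum_congr rfl fun j _ => ?_
    rw [hS.apply i j]
  have hdirect :
      ∑ i, ∑ j, x i ^ 2 / v i * (S i j * v j) = ∑ i, x i ^ 2 / v i * (S *ᵥ v) i := by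
    simp only [mulVec, dotProduct, Finset.mul_sum]
  have : 2 * (x ⬝ᵥ (S *ᵥ x)) ≤ 2 * ∑ i, x i ^ 2 / v i * (S *ᵥ v) i :=
    calc 2 * (x ⬝ᵥ (S *ᵥ x)) = ∑ i, ∑ j, 2 * (x i * (S i j * x j)) := by
          simp only [dotProduct, mulVec, Finset.mul_sum]
      _ ≤ ∑ i, ∑ j, (x i ^ 2 / v i * (S i j * v j) + x j ^ 2 / v j * (S i j * v i)) :=
          Finset.sum_le_sum fun i _ => Finset.sum_le_sum fun j _ => hterm i j
      _ = 2 * ∑ i, x i ^ 2 / v i * (S *ᵥ v) i := by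
          simp only [Finset.sum_add_distrib, hdirect, hswap]
          ring
  linarith

theorem IsMetzler.posDef_neg [Fintype ι] {S : Matrix ι ι ℝ} (hS : S.IsSymm) (hM : S.IsMetzler)
    {v : ι → ℝ} (hv : ∀ i, 0 < v i) (hSv : ∀ i, (S *ᵥ v) i < 0) : (-S).PosDef := by
  refine PosDef.of_dotProduct_mulVec_pos (isHermitian_iff_isSymm.2 hS.neg) fun x hx => ?_
  obtain ⟨i₀, hi₀⟩ := Function.ne_iff.1 hx
  have hsum : ∑ i, x i ^ 2 / v i * (S *ᵥ v) i < ∑ _i : ι, (0 : ℝ) := by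
    refine Finset.sum_lt_sum (fun i _ => ?_) ⟨i₀, Finset.mem_univ _, ?_⟩
    · exact mul_nonpos_of_nonneg_of_nonpos (div_nonneg (sq_nonneg _) (hv i).le) (hSv i).le
    · exact mul_neg_of_pos_of_neg (div_pos (pow_two_pos_of_ne_zero hi₀) (hv i₀)) (hSv i₀)
  rw [star_trivial, neg_mulVec, dotProduct_neg, Finset.sum_const_zero] at *
  linarith [hM.dotProduct_mulVec_le hS hv x]

end Metzler

section Hurwitz

variable {ι : Type*} [Fintype ι] [DecidableEq ι]

def IsHurwitz (M : Matrix ι ι ℝ) : Prop :=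
  ∀ μ ∈ spectrum ℂ (M.map Complex.ofReal), μ.re < 0

theorem IsHurwitz.transpose {M : Matrix ι ι ℝ} (hM : M.IsHurwitz) : Mᵀ.IsHurwitz := by
  intro μ hμ
  refine hM μ ?_
  rwa [mem_spectrum_iff_isRoot_charpoly, transpose_map, charpoly_transpose,
    ← mem_spectrum_iff_isRoot_charpoly] at hμ

theorem IsHurwitz.notMem_spectrum {M : Matrix ι ι ℝ} (hM : M.IsHurwitz) {r : ℝ} (hr : 0 ≤ r) :
    r ∉ spectrum ℝ M := by
  intro h
  have : (r : ℂ) ∈ spectrum ℂ (M.map Complex.ofReal) := by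
    rw [mem_spectrum_iff_isRoot_charpoly] at h ⊢
    have := h.map (f := Complex.ofRealHom)
    rwa [← charpoly_map] at this
  exact (hM _ this).not_ge (by simpa using hr)

theorem IsHurwitz.isUnit_smul_sub_smul_one {M : Matrix ι ι ℝ} (hM : M.IsHurwitz) {t : ℝ}
    (ht₀ : 0 ≤ t) (ht₁ : t ≤ 1) : IsUnit (t • M - (1 - t) • 1) := by
  rcases ht₀.eq_or_lt with rfl | ht
  · simp
  have hunit := spectrum.notMem_iff.1 (hM.notMem_spectrum (r := (1 - t) / t) (by
    have := sub_nonneg.2 ht₁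
    positivity))
  have : t • M - (1 - t) • 1 = -(Units.mk0 t ht.ne' • (algebraMap ℝ _ ((1 - t) / t) - M)) := by
    rw [Units.smul_mk0, Algebra.algebraMap_eq_smul_one, smul_sub, smul_smul,
      mul_div_cancel₀ _ ht.ne']
    abel
  rw [this]
  exact (hunit.smul _).neg

theorem IsMetzler.exists_pos_mulVec_neg {M : Matrix ι ι ℝ} (hM : M.IsMetzler)
    (hH : M.IsHurwitz) : ∃ v : ι → ℝ, (∀ i, 0 < v i) ∧ ∀ i, (M *ᵥ v) i < 0 := by
  let N : Set.Icc (0 : ℝ) 1 → Matrix ι ι ℝ := fun t => (t : ℝ) • M - (1 - (t : ℝ)) • 1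
  have hNunit (t : Set.Icc (0 : ℝ) 1) : IsUnit (N t) := hH.isUnit_smul_sub_smul_one t.2.1 t.2.2
  let u : Set.Icc (0 : ℝ) 1 → ι → ℝ := fun t => (N t)⁻¹ *ᵥ (-1)
  have hNu (t) : N t *ᵥ u t = -1 := by
    rw [mulVec_mulVec, mul_nonsing_inv _ ((isUnit_iff_isUnit_det _).1 (hNunit t)), one_mulVec]
  have hN : Continuous N := by fun_prop
  have hu : Continuous u := by
    refine (continuous_iff_continuousAt.2 fun t => ?_).matrix_mulVec continuous_const
    refine (continuousAt_matrix_inv _ ?_).comp hN.continuousAt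
    rw [Ring.inverse_eq_inv']
    exact continuousAt_inv₀ ((isUnit_iff_isUnit_det _).1 (hNunit t)).ne_zero
  have h₀ (i : ι) : 0 < u 0 i := by
    have := congrFun (hNu 0) i
    simp only [N, Set.Icc.coe_zero, zero_smul, sub_zero, one_smul, zero_sub, neg_mulVec,
      one_mulVec, Pi.neg_apply, neg_inj] at this
    simp [this]
  have hstep (t) (ht : ∀ i, 0 ≤ u t i) (i : ι) : 0 < u t i := by
    refine ((hM.smul t.2.1).sub_smul_one (1 - t)).pos_of_mulVec_neg ht ?_
    rw [hNu t]
    simp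
  refine ⟨u 1, forall_pos_of_nonneg_imp_pos hu h₀ hstep 1, fun i => ?_⟩
  have := congrFun (hNu 1) i
  simp only [N, Set.Icc.coe_one, one_smul, sub_self, zero_smul, sub_zero] at this
  simp [this]

end Hurwitz

section Nonneg

variable {m n o : Type*} [Fintype n]

theorem mulVec_nonneg {B : Matrix m n ℝ} (hB : ∀ i j, 0 ≤ B i j) {w : n → ℝ} (hw : ∀ j, 0 ≤ w j)
    (i : m) : 0 ≤ (B *ᵥ w) i :=
  Finset.sum_nonneg fun j _ => mul_nonneg (hB i j) (hw j)

theorem mulVec_le_mulVec {B : Matrix m n ℝ} (hB : ∀ i j, 0 ≤ B i j) {z v : n → ℝ}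
    (hzv : ∀ j, z j ≤ v j) (i : m) : (B *ᵥ z) i ≤ (B *ᵥ v) i :=
  Finset.sum_le_sum fun j _ => mul_le_mul_of_nonneg_left (hzv j) (hB i j)

theorem mulVec_neg_of_add_mulVec_neg {A B : Matrix m n ℝ} (hB : ∀ i j, 0 ≤ B i j) {w : n → ℝ}
    (hw : ∀ j, 0 ≤ w j) (h : ∀ i, ((A + B) *ᵥ w) i < 0) (i : m) : (A *ᵥ w) i < 0 := by
  have := h i
  rw [add_mulVec, Pi.add_apply] at this
  linarith [mulVec_nonneg hB hw i]

theorem mul_apply_nonneg {M : Matrix m n ℝ} {N : Matrix n o ℝ} (hM : ∀ i j, 0 ≤ M i j)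
    (hN : ∀ i j, 0 ≤ N i j) (i : m) (j : o) : 0 ≤ (M * N) i j :=
  Finset.sum_nonneg fun k _ => mul_nonneg (hM i k) (hN k j)

end Nonneg

theorem diagonal_apply_nonneg {ι : Type*} [DecidableEq ι] {d : ι → ℝ} (hd : ∀ i, 0 ≤ d i)
    (i j : ι) : 0 ≤ diagonal d i j := by
  rw [diagonal_apply]
  split_ifs
  exacts [hd i, le_rfl]

section Riccati

variable {ι : Type*} [Fintype ι] [DecidableEq ι]

theorem inv_diagonal_of_ne_zero {K : Type*} [Field K] {d : ι → K} (hd : ∀ i, d i ≠ 0) :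
    (diagonal d)⁻¹ = diagonal d⁻¹ :=
  inv_eq_left_inv <| by
    rw [diagonal_mul_diagonal, ← diagonal_one]
    exact congrArg diagonal (funext fun i => inv_mul_cancel₀ (hd i))

noncomputable def riccati (A B : Matrix ι ι ℝ) (p q : ι → ℝ) : Matrix ι ι ℝ :=
  Aᵀ * diagonal p + diagonal p * A + diagonal q + diagonal p * B * (diagonal q)⁻¹ * Bᵀ * diagonal p

theorem riccati_isSymm (A B : Matrix ι ι ℝ) (p q : ι → ℝ) : (riccati A B p q).IsSymm := by
  simp only [IsSymm, riccati, transpose_add, transpose_mul, diagonal_transpose, transpose_transpose,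
    transpose_nonsing_inv, Matrix.mul_assoc]
  abel

theorem IsMetzler.riccati {A B : Matrix ι ι ℝ} (hA : A.IsMetzler) (hB : ∀ i j, 0 ≤ B i j)
    {p q : ι → ℝ} (hp : ∀ i, 0 ≤ p i) (hq : ∀ i, 0 < q i) : (riccati A B p q).IsMetzler := by
  have hP := diagonal_apply_nonneg hp
  have hQ : ∀ i j, 0 ≤ (diagonal q)⁻¹ i j := by
    rw [inv_diagonal_of_ne_zero fun i => (hq i).ne']
    exact diagonal_apply_nonneg fun i => inv_nonneg.2 (hq i).le
  have hPBQBP := mul_apply_nonneg (mul_apply_nonneg (mul_apply_nonneg (mul_apply_nonneg hP hB) hQ)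
    (fun i j => hB j i)) hP
  exact (((hA.transpose.mul_diagonal hp).add (hA.diagonal_mul hp)).add
    (isMetzler_diagonal q)).add (isMetzler_of_nonneg hPBQBP)

theorem riccati_mulVec_neg {A B : Matrix ι ι ℝ} (hB : ∀ i j, 0 ≤ B i j) {v w : ι → ℝ}
    (hv : ∀ i, 0 < v i) (hw : ∀ i, 0 < w i) (hMv : ∀ i, ((A + B) *ᵥ v) i < 0)
    (hMw : ∀ i, ((A + B)ᵀ *ᵥ w) i < 0) (i : ι) :
    (riccati A B (w / v) (-(Aᵀ *ᵥ w) / v) *ᵥ v) i < 0 := by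
  have hAw := mulVec_neg_of_add_mulVec_neg (A := Aᵀ) (B := Bᵀ) (fun i j => hB j i)
    (fun j => (hw j).le) (by simpa only [transpose_add] using hMw)
  set p := w / v
  set q := -(Aᵀ *ᵥ w) / v
  have hq (j : ι) : q j ≠ 0 := (div_pos (neg_pos.2 (hAw j)) (hv j)).ne'
  have hPv : diagonal p *ᵥ v = w := funext fun j => by
    simp [mulVec_diagonal, p, div_mul_cancel₀ _ (hv j).ne']
  have hQv : diagonal q *ᵥ v = -(Aᵀ *ᵥ w) := funext fun j => by
    simp [mulVec_diagonal, q, div_mul_cancel₀ _ (hv j).ne']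
  set z := (diagonal q)⁻¹ *ᵥ (Bᵀ *ᵥ w)
  have hzv (j : ι) : z j ≤ v j := by
    have hMwj := hMw j
    rw [transpose_add, add_mulVec, Pi.add_apply] at hMwj
    simp only [z, inv_diagonal_of_ne_zero hq, mulVec_diagonal, q, Pi.div_apply,
      Pi.neg_apply, inv_div]
    rw [div_mul_eq_mul_div, div_le_iff₀ (neg_pos.2 (hAw j))]
    nlinarith [hv j]
  have hRv : riccati A B p q *ᵥ v = diagonal p *ᵥ (A *ᵥ v + B *ᵥ z) := by
    simp only [riccati, add_mulVec, ← mulVec_mulVec, hPv, hQv, z, mulVec_add]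
    abel
  have hpi : 0 < p i := div_pos (hw i) (hv i)
  have hMvi : (A *ᵥ v) i + (B *ᵥ v) i < 0 := by simpa only [add_mulVec, Pi.add_apply] using hMv i
  have hBz := mulVec_le_mulVec hB hzv i
  rw [hRv, mulVec_diagonal, Pi.add_apply]
  nlinarith

end Riccati

end Matrix

theorem metzler_nonneg_hurwitz_riccati (n : ℕ) (A B : Matrix (Fin n) (Fin n) ℝ)
    (hMetzler : ∀ i j, i ≠ j → 0 ≤ A i j) (hB : ∀ i j, 0 ≤ B i j)
    (hHurwitz : ∀ μ ∈ spectrum ℂ ((A + B).map Complex.ofReal), μ.re < 0) :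
    ∃ p q : Fin n → ℝ, (∀ i, 0 < p i) ∧ (∀ i, 0 < q i) ∧
      (-(Aᵀ * Matrix.diagonal p + Matrix.diagonal p * A + Matrix.diagonal q +
        Matrix.diagonal p * B * (Matrix.diagonal q)⁻¹ * Bᵀ * Matrix.diagonal p)).PosDef := by
  have hA : A.IsMetzler := hMetzler
  have hM : (A + B).IsMetzler := hA.add (isMetzler_of_nonneg hB)
  have hH : (A + B).IsHurwitz := hHurwitz
  obtain ⟨v, hv, hMv⟩ := hM.exists_pos_mulVec_neg hH
  obtain ⟨w, hw, hMw⟩ := hM.transpose.exists_pos_mulVec_neg hH.transpose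
  have hAw := mulVec_neg_of_add_mulVec_neg (A := Aᵀ) (B := Bᵀ) (fun i j => hB j i)
    (fun j => (hw j).le) (by simpa only [transpose_add] using hMw)
  have hp (i : Fin n) : 0 < (w / v) i := div_pos (hw i) (hv i)
  have hq (i : Fin n) : 0 < (-(Aᵀ *ᵥ w) / v) i := div_pos (neg_pos.2 (hAw i)) (hv i)
  exact ⟨w / v, -(Aᵀ *ᵥ w) / v, hp, hq, IsMetzler.posDef_neg (riccati_isSymm A B _ _)
    (hA.riccati hB (fun i => (hp i).le) hq) hv (riccati_mulVec_neg hB hv hw hMv hMw)⟩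
end

section
/- Let A, B ∈ ℝ^{n×n} be lower triangular. If there exist diagonal positive definite matrices P, Q with A^T P + P A + Q + P B Q^{-1} B^T P ≺ 0, then A is Hurwitz and |b_{ii}| < |a_{ii}| for all i = 1, …, n. -/
/-!
Positive definiteness of `-(AᵀP + PA + Q + PBQ⁻¹BᵀP)` makes each of its diagonal entries positive.
With `P = diag p`, `Q = diag q`, the `i`-th diagonal entry of the Riccati expression is at least
`2 pᵢ aᵢᵢ + qᵢ + pᵢ² bᵢᵢ² / qᵢ`, so this quantity is negative, and by AM-GM
(`qᵢ² + pᵢ² bᵢᵢ² ≥ 2 pᵢ qᵢ |bᵢᵢ|`) we get `|bᵢᵢ| < -aᵢᵢ`. The eigenvalues of the lower triangular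
`A` are its diagonal entries, which are therefore negative.
-/

open Matrix

open Polynomial in
theorem Matrix.IsLowerTriangular.charpoly_eq {n R : Type*} [Fintype n] [DecidableEq n]
    [LinearOrder n] [CommRing R] {M : Matrix n n R} (h : M.IsLowerTriangular) :
    M.charpoly = ∏ i, (X - C (M i i)) := by
  rw [← charpoly_transpose]
  exact charpoly_of_isUpperTriangular Mᵀ h.transpose

open Polynomial in
theorem Matrix.IsLowerTriangular.mem_spectrum_iff {n K : Type*} [Fintype n] [DecidableEq n]
    [LinearOrder n] [Field K] {M : Matrix n n K} (h : M.IsLowerTriangular) {μ : K} :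
    μ ∈ spectrum K M ↔ ∃ i, M i i = μ := by
  simp [mem_spectrum_iff_isRoot_charpoly, h.charpoly_eq, eval_prod, Finset.prod_eq_zero_iff,
    sub_eq_zero, @eq_comm _ μ]

theorem Matrix.inv_diagonal_of_ne_zero_s11 {n K : Type*} [Fintype n] [DecidableEq n] [Field K]
    {q : n → K} (hq : ∀ i, q i ≠ 0) : (diagonal q)⁻¹ = diagonal q⁻¹ := by
  refine inv_eq_right_inv ?_
  rw [diagonal_mul_diagonal, ← diagonal_one]
  exact congrArg diagonal (funext fun i => mul_inv_cancel₀ (hq i))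

theorem Matrix.diagonal_mul_mul_diagonal_mul_transpose_mul_diagonal_apply_self
    {n R : Type*} [Fintype n] [DecidableEq n] [CommSemiring R]
    (p r : n → R) (B : Matrix n n R) (i : n) :
    (diagonal p * B * diagonal r * Bᵀ * diagonal p) i i = p i ^ 2 * ∑ k, r k * B i k ^ 2 := by
  rw [mul_diagonal, mul_apply, Finset.sum_mul, Finset.mul_sum]
  simp only [mul_diagonal, diagonal_mul, transpose_apply]
  exact Finset.sum_congr rfl fun k _ => by ring

theorem riccati_apply_self_ge {n : Type*} [Fintype n] [DecidableEq n] {A B : Matrix n n ℝ}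
    {p q : n → ℝ} (hq : ∀ i, 0 < q i) (i : n) :
    2 * p i * A i i + q i + p i ^ 2 * (B i i ^ 2 / q i) ≤
      (Aᵀ * diagonal p + diagonal p * A + diagonal q +
        diagonal p * B * (diagonal q)⁻¹ * Bᵀ * diagonal p) i i := by
  rw [inv_diagonal_of_ne_zero_s11 fun k => (hq k).ne', Matrix.add_apply, Matrix.add_apply, Matrix.add_apply,
    diagonal_mul_mul_diagonal_mul_transpose_mul_diagonal_apply_self, mul_diagonal, diagonal_mul,
    transpose_apply, diagonal_apply_eq]
  have hsum : B i i ^ 2 / q i ≤ ∑ k, q⁻¹ k * B i k ^ 2 := by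
    refine le_of_eq_of_le ?_ (Finset.single_le_sum (f := fun k => q⁻¹ k * B i k ^ 2)
      (fun k _ => mul_nonneg (inv_nonneg.mpr (hq k).le) (sq_nonneg _)) (Finset.mem_univ i))
    simp [div_eq_inv_mul]
  nlinarith [sq_nonneg (p i)]

theorem abs_lt_neg_of_two_mul_mul_add_add_sq_div_neg {p q a b : ℝ} (hp : 0 < p) (hq : 0 < q)
    (h : 2 * p * a + q + p ^ 2 * (b ^ 2 / q) < 0) : |b| < -a := by
  have hcleared : q ^ 2 + 2 * p * q * a + p ^ 2 * b ^ 2 < 0 := by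
    have := mul_neg_of_neg_of_pos h hq
    field_simp at this
    linarith
  nlinarith [sq_nonneg (q - p * |b|), sq_abs b, mul_pos hp hq]

theorem lower_triangular_riccati_necessary_general (n : ℕ) (A B : Matrix (Fin n) (Fin n) ℝ)
    (hA : ∀ i j : Fin n, i < j → A i j = 0)
    (h : ∃ p q : Fin n → ℝ, (∀ i, 0 < p i) ∧ (∀ i, 0 < q i) ∧
      (-(Aᵀ * Matrix.diagonal p + Matrix.diagonal p * A + Matrix.diagonal q +
        Matrix.diagonal p * B * (Matrix.diagonal q)⁻¹ * Bᵀ * Matrix.diagonal p)).PosDef) :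
    (∀ μ ∈ spectrum ℂ (A.map Complex.ofReal), μ.re < 0) ∧
    (∀ i : Fin n, |B i i| < |A i i|) := by
  obtain ⟨p, q, hp, hq, hP⟩ := h
  have hBA : ∀ i, |B i i| < -A i i := fun i => by
    have hdiag := hP.diag_pos (i := i)
    rw [neg_apply, neg_pos] at hdiag
    exact abs_lt_neg_of_two_mul_mul_add_add_sq_div_neg (hp i) (hq i)
      ((riccati_apply_self_ge hq i).trans_lt hdiag)
  have hA_neg : ∀ i, A i i < 0 := fun i => by linarith [abs_nonneg (B i i), hBA i]
  refine ⟨fun μ hμ => ?_, fun i => abs_of_neg (hA_neg i) ▸ hBA i⟩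
  have hA_lower : (A.map Complex.ofReal).IsLowerTriangular :=
    BlockTriangular.map Complex.ofRealHom fun i j hij => hA i j hij
  obtain ⟨i, rfl⟩ := hA_lower.mem_spectrum_iff.mp hμ
  simpa using hA_neg i

theorem lower_triangular_riccati_necessary (n : ℕ) (A B : Matrix (Fin n) (Fin n) ℝ)
    (hA : ∀ i j : Fin n, i < j → A i j = 0) (hB : ∀ i j : Fin n, i < j → B i j = 0)
    (h : ∃ p q : Fin n → ℝ, (∀ i, 0 < p i) ∧ (∀ i, 0 < q i) ∧
      (-(Aᵀ * Matrix.diagonal p + Matrix.diagonal p * A + Matrix.diagonal q +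
        Matrix.diagonal p * B * (Matrix.diagonal q)⁻¹ * Bᵀ * Matrix.diagonal p)).PosDef) :
    (∀ μ ∈ spectrum ℂ (A.map Complex.ofReal), μ.re < 0) ∧
    (∀ i : Fin n, |B i i| < |A i i|) :=
  lower_triangular_riccati_necessary_general n A B hA h
end
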